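/- arXiv:2509.20921 — 5 statements merged into one kernel-verified Lean document; each statement's English description precedes it below -/
import Mathlib

section
/- The function d_rk defines a metric on the set (ℝ²_≤ ∖ Δ) ∪ {Δ} (the quotient of ℝ²_≤ in which the diagonal is collapsed to a single point Δ): d_rk is nonnegative and symmetric, d_rk(u,v) = 0 if and only if u = v, and the triangle inequality d_rk(u,w) ≤ d_rk(u,v) + d_rk(v,w) holds for all u, v, w in (ℝ²_≤ ∖ Δ) ∪ {Δ}, where distances involving the point Δ are given by d_rk(x,Δ) = ½(x₂−x₁)². -/
open scoped Classical ENNReal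
open MeasureTheory Filter

noncomputable section

/-- Off-diagonal points of `ℝ²_≤`. -/
abbrev Pt : Type := {p : ℝ × ℝ // p.1 < p.2}

/-- The quotient `(ℝ²_≤ ∖ Δ) ∪ {Δ}`: the diagonal is collapsed to the single
point `none`. -/
abbrev PtD : Type := Option Pt

/-- The rank "distance" formula on `ℝ²_≤`. -/
def drk (x y : ℝ × ℝ) : ℝ :=
  (x.2 - x.1) ^ 2 / 2 + (y.2 - y.1) ^ 2 / 2 - (max (min x.2 y.2 - max x.1 y.1) 0) ^ 2

/-- The dimension "distance" formula on `ℝ²_≤` (length of the symmetric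
difference of the intervals `[x₁,x₂]` and `[y₁,y₂]`). -/
def ddim (x y : ℝ × ℝ) : ℝ :=
  (x.2 - x.1) + (y.2 - y.1) - 2 * max (min x.2 y.2 - max x.1 y.1) 0

/-- `d_rk` on the quotient `(ℝ²_≤ ∖ Δ) ∪ {Δ}`, with `d_rk(x,Δ) = ½(x₂−x₁)²`. -/
def drkQ : PtD → PtD → ℝ
  | Option.some x, Option.some y => drk x.1 y.1
  | Option.some x, Option.none => (x.1.2 - x.1.1) ^ 2 / 2
  | Option.none, Option.some y => (y.1.2 - y.1.1) ^ 2 / 2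
  | Option.none, Option.none => 0

/-- `d_dim` on the quotient `(ℝ²_≤ ∖ Δ) ∪ {Δ}`, with `d_dim(x,Δ) = x₂−x₁`. -/
def ddimQ : PtD → PtD → ℝ
  | Option.some x, Option.some y => ddim x.1 y.1
  | Option.some x, Option.none => x.1.2 - x.1.1
  | Option.none, Option.some y => y.1.2 - y.1.1
  | Option.none, Option.none => 0

/-!
For closed intervals `x = [x₁, x₂]`, degenerate or not, `d_rk(x, y) = ½|x|² + ½|y|² - |x ∩ y|²`
with `|x ∩ y| = overlap x y`. The point `Δ` behaves like any degenerate interval, since it meets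
nothing in positive length, so it suffices to work with intervals; there distance zero means
equal or both degenerate. Writing `b = |y|`, `p = |x ∩ y|`, `q = |y ∩ z|`, `r = |x ∩ z|`, the
triangle inequality reads `p² + q² ≤ b² + r²`. The two pieces `x ∩ y` and `y ∩ z` of `y` overlap
inside `x ∩ z`, so `p + q ≤ b + r`, and with `p, q ≤ b` this bound on the sum passes to the sum
of squares.
-/

def overlap (x y : ℝ × ℝ) : ℝ := max (min x.2 y.2 - max x.1 y.1) 0

lemma overlap_nonneg (x y : ℝ × ℝ) : 0 ≤ overlap x y := le_max_right _ _

lemma overlap_comm (x y : ℝ × ℝ) : overlap x y = overlap y x := by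
  simp only [overlap, min_comm, max_comm]

lemma overlap_self {x : ℝ × ℝ} (hx : x.1 ≤ x.2) : overlap x x = x.2 - x.1 := by
  simp only [overlap, min_self, max_self]
  exact max_eq_left (sub_nonneg.2 hx)

lemma overlap_eq_zero_of_snd_le_fst (x : ℝ × ℝ) {y : ℝ × ℝ} (hy : y.2 ≤ y.1) :
    overlap x y = 0 :=
  max_eq_right <| sub_nonpos.2 <| (min_le_right _ _).trans <| hy.trans (le_max_right _ _)

lemma overlap_eq_of_pos {x y : ℝ × ℝ} (h : 0 < overlap x y) :
    overlap x y = min x.2 y.2 - max x.1 y.1 :=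
  max_eq_left ((lt_max_iff.1 h).resolve_right (lt_irrefl 0)).le

lemma overlap_le_left {x : ℝ × ℝ} (hx : x.1 ≤ x.2) (y : ℝ × ℝ) : overlap x y ≤ x.2 - x.1 :=
  max_le (sub_le_sub (min_le_left _ _) (le_max_left _ _)) (sub_nonneg.2 hx)

lemma overlap_le_right (x : ℝ × ℝ) {y : ℝ × ℝ} (hy : y.1 ≤ y.2) : overlap x y ≤ y.2 - y.1 :=
  overlap_comm x y ▸ overlap_le_left hy x

lemma overlap_add_overlap_le (x z : ℝ × ℝ) {y : ℝ × ℝ} (hy : y.1 ≤ y.2) :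
    overlap x y + overlap y z ≤ (y.2 - y.1) + overlap x z := by
  have hmin : min x.2 y.2 + min y.2 z.2 ≤ y.2 + min x.2 z.2 := by
    rcases min_cases x.2 y.2 with ⟨_, _⟩ | ⟨_, _⟩ <;>
      rcases min_cases y.2 z.2 with ⟨_, _⟩ | ⟨_, _⟩ <;>
      rcases min_cases x.2 z.2 with ⟨_, _⟩ | ⟨_, _⟩ <;> linarith
  have hmax : y.1 + max x.1 z.1 ≤ max x.1 y.1 + max y.1 z.1 := by
    rcases max_cases x.1 y.1 with ⟨_, _⟩ | ⟨_, _⟩ <;>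
      rcases max_cases y.1 z.1 with ⟨_, _⟩ | ⟨_, _⟩ <;>
      rcases max_cases x.1 z.1 with ⟨_, _⟩ | ⟨_, _⟩ <;> linarith
  have hxz : min x.2 z.2 - max x.1 z.1 ≤ overlap x z := le_max_left _ _
  rcases (overlap_nonneg x y).eq_or_lt with hp | hp
  · linarith [overlap_le_left hy z, overlap_nonneg x z]
  rcases (overlap_nonneg y z).eq_or_lt with hq | hq
  · linarith [overlap_le_right x hy, overlap_nonneg x z]
  rw [overlap_eq_of_pos hp, overlap_eq_of_pos hq]
  linarith

lemma sq_add_sq_le_sq_add_sq {p q r b : ℝ} (hp₀ : 0 ≤ p) (hq₀ : 0 ≤ q) (hr₀ : 0 ≤ r)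
    (hp : p ≤ b) (hq : q ≤ b) (h : p + q ≤ b + r) : p ^ 2 + q ^ 2 ≤ b ^ 2 + r ^ 2 := by
  rcases le_total (p + q) b with hpq | hpq
  · nlinarith
  · -- `b² + (p + q - b)² - (p² + q²) = 2(b - p)(b - q) ≥ 0` and `0 ≤ p + q - b ≤ r`
    nlinarith [mul_nonneg (sub_nonneg.2 hp) (sub_nonneg.2 hq),
      mul_nonneg (by linarith : 0 ≤ r - (p + q - b)) (by linarith : 0 ≤ r + (p + q - b))]

lemma drk_eq (x y : ℝ × ℝ) :
    drk x y = (x.2 - x.1) ^ 2 / 2 + (y.2 - y.1) ^ 2 / 2 - overlap x y ^ 2 := rfl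

lemma drk_comm (x y : ℝ × ℝ) : drk x y = drk y x := by
  rw [drk_eq, drk_eq, overlap_comm]; ring

lemma drk_nonneg {x y : ℝ × ℝ} (hx : x.1 ≤ x.2) (hy : y.1 ≤ y.2) : 0 ≤ drk x y := by
  rw [drk_eq]
  nlinarith [overlap_nonneg x y, overlap_le_left hx y, overlap_le_right x hy]

lemma drk_eq_zero_iff {x y : ℝ × ℝ} (hx : x.1 ≤ x.2) (hy : y.1 ≤ y.2) :
    drk x y = 0 ↔ x = y ∨ (x.1 = x.2 ∧ y.1 = y.2) := by
  constructor
  · intro h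
    rw [drk_eq] at h
    have h₀ := overlap_nonneg x y
    have hx' := overlap_le_left hx y
    have hy' := overlap_le_right x hy
    have hlx : overlap x y = x.2 - x.1 := by nlinarith
    have hly : overlap x y = y.2 - y.1 := by nlinarith
    rcases h₀.eq_or_lt with h₀ | h₀
    · exact Or.inr ⟨by linarith, by linarith⟩
    · have hov := overlap_eq_of_pos h₀
      have := min_le_left x.2 y.2
      have := min_le_right x.2 y.2
      have := le_max_left x.1 y.1
      have := le_max_right x.1 y.1
      exact Or.inl (Prod.ext (by linarith) (by linarith))
  · rintro (rfl | ⟨hx₀, hy₀⟩)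
    · rw [drk_eq, overlap_self hx]; ring
    · rw [drk_eq, overlap_eq_zero_of_snd_le_fst x hy₀.ge, hx₀, hy₀]; ring

lemma drk_triangle {x y z : ℝ × ℝ} (hy : y.1 ≤ y.2) : drk x z ≤ drk x y + drk y z := by
  have := sq_add_sq_le_sq_add_sq (overlap_nonneg x y) (overlap_nonneg y z)
    (overlap_nonneg x z) (overlap_le_right x hy) (overlap_le_left hy z)
    (overlap_add_overlap_le x z hy)
  simp only [drk_eq]
  linarith

def PtD.toProd : PtD → ℝ × ℝ
  | some x => x.1
  | none => (0, 0)

lemma PtD.toProd_fst_le_snd (u : PtD) : u.toProd.1 ≤ u.toProd.2 := by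
  cases u with
  | none => exact le_rfl
  | some x => exact x.2.le

lemma PtD.toProd_fst_eq_snd_iff (u : PtD) : u.toProd.1 = u.toProd.2 ↔ u = none := by
  cases u with
  | none => simp [PtD.toProd]
  | some x => simpa [PtD.toProd] using x.2.ne

lemma PtD.toProd_injective : Function.Injective PtD.toProd := by
  rintro (_ | x) (_ | y) h
  · rfl
  · exact absurd ((PtD.toProd_fst_eq_snd_iff (some y)).1 (by rw [← h]; rfl)) (by simp)
  · exact absurd ((PtD.toProd_fst_eq_snd_iff (some x)).1 (by rw [h]; rfl)) (by simp)
  · exact congrArg some (Subtype.ext h)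

lemma drkQ_eq_drk (u v : PtD) : drkQ u v = drk u.toProd v.toProd := by
  have h₀ (x : ℝ × ℝ) : overlap x (0, 0) = 0 := overlap_eq_zero_of_snd_le_fst x le_rfl
  rcases u with _ | x <;> rcases v with _ | y <;>
    simp only [drkQ, PtD.toProd, drk_eq, h₀, overlap_comm (0, 0)] <;> ring

/-- `d_rk` defines a metric on the quotient `(ℝ²_≤ ∖ Δ) ∪ {Δ}`: it is
nonnegative, symmetric, vanishes exactly on the diagonal of the quotient, and
satisfies the triangle inequality. -/
theorem stmt1 :
    (∀ u v : PtD, 0 ≤ drkQ u v) ∧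
    (∀ u v : PtD, drkQ u v = drkQ v u) ∧
    (∀ u v : PtD, drkQ u v = 0 ↔ u = v) ∧
    (∀ u v w : PtD, drkQ u w ≤ drkQ u v + drkQ v w) := by
  refine ⟨fun u v ↦ ?_, fun u v ↦ ?_, fun u v ↦ ?_, fun u v w ↦ ?_⟩ <;>
    simp only [drkQ_eq_drk]
  · exact drk_nonneg u.toProd_fst_le_snd v.toProd_fst_le_snd
  · exact drk_comm _ _
  · rw [drk_eq_zero_iff u.toProd_fst_le_snd v.toProd_fst_le_snd, PtD.toProd_injective.eq_iff,
      PtD.toProd_fst_eq_snd_iff, PtD.toProd_fst_eq_snd_iff]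
    exact or_iff_left_of_imp fun ⟨hu, hv⟩ ↦ hu.trans hv.symm
  · exact drk_triangle v.toProd_fst_le_snd

end
end

section
/- Neither the identity map from ((ℝ²_≤ ∖ Δ) ∪ {Δ}, d_rk) to ((ℝ²_≤ ∖ Δ) ∪ {Δ}, d_dim) nor its inverse is Lipschitz: for every constant C > 0 there exist distinct points u, v in (ℝ²_≤ ∖ Δ) ∪ {Δ} with d_rk(u,v) > C · d_dim(u,v), and there exist distinct points u', v' with d_dim(u',v') > C · d_rk(u',v'). In particular, for x = (0,c) one has d_rk(x,Δ)/d_dim(x,Δ) = c/2 → ∞ as c → ∞ and d_dim(x,Δ)/d_rk(x,Δ) = 2/c → ∞ as c → 0⁺. -/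
open scoped Classical ENNReal
open MeasureTheory Filter

noncomputable section

/-! The distance of `(0, c)` to the diagonal is `c` for `d_dim` but `c² / 2` for `d_rk`, so the
ratio `d_rk / d_dim = c / 2` is unbounded as `c → ∞` and its inverse `2 / c` is unbounded as
`c → 0⁺`. -/

theorem drkQ_some_zero_none (c : ℝ) (hc : 0 < c) :
    drkQ (some ⟨(0, c), hc⟩) none = c ^ 2 / 2 := by
  simp [drkQ]

theorem ddimQ_some_zero_none (c : ℝ) (hc : 0 < c) :
    ddimQ (some ⟨(0, c), hc⟩) none = c := by
  simp [ddimQ]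

theorem drkQ_div_ddimQ_some_zero_none (c : ℝ) (hc : 0 < c) :
    drkQ (some ⟨(0, c), hc⟩) none / ddimQ (some ⟨(0, c), hc⟩) none = c / 2 := by
  rw [drkQ_some_zero_none, ddimQ_some_zero_none]
  field_simp

theorem ddimQ_div_drkQ_some_zero_none (c : ℝ) (hc : 0 < c) :
    ddimQ (some ⟨(0, c), hc⟩) none / drkQ (some ⟨(0, c), hc⟩) none = 2 / c := by
  rw [drkQ_some_zero_none, ddimQ_some_zero_none]
  field_simp

theorem tendsto_div_two_atTop : Tendsto (fun c : ℝ => c / 2) atTop atTop :=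
  tendsto_id.atTop_div_const two_pos

theorem tendsto_two_div_nhdsGT_zero :
    Tendsto (fun c : ℝ => 2 / c) (nhdsWithin 0 (Set.Ioi 0)) atTop := by
  simpa only [div_eq_mul_inv] using tendsto_inv_nhdsGT_zero.const_mul_atTop two_pos

theorem exists_ne_mul_ddimQ_lt_drkQ (C : ℝ) : ∃ u v : PtD, u ≠ v ∧ C * ddimQ u v < drkQ u v := by
  obtain ⟨c, hCc, hc⟩ :=
    ((tendsto_div_two_atTop.eventually_gt_atTop C).and (eventually_gt_atTop 0)).exists
  refine ⟨some ⟨(0, c), hc⟩, none, Option.some_ne_none _, ?_⟩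
  rw [drkQ_some_zero_none, ddimQ_some_zero_none]
  calc C * c < c / 2 * c := mul_lt_mul_of_pos_right hCc hc
    _ = c ^ 2 / 2 := by ring

theorem exists_ne_mul_drkQ_lt_ddimQ (C : ℝ) : ∃ u v : PtD, u ≠ v ∧ C * drkQ u v < ddimQ u v := by
  obtain ⟨c, hCc, hc⟩ :=
    ((tendsto_two_div_nhdsGT_zero.eventually_gt_atTop C).and self_mem_nhdsWithin).exists
  refine ⟨some ⟨(0, c), hc⟩, none, Option.some_ne_none _, ?_⟩
  rw [drkQ_some_zero_none, ddimQ_some_zero_none]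
  calc C * (c ^ 2 / 2) < 2 / c * (c ^ 2 / 2) := mul_lt_mul_of_pos_right hCc (by positivity)
    _ = c := by field_simp

/-- Neither the identity from `d_rk` to `d_dim` nor its inverse is Lipschitz;
in particular for `x = (0,c)` the ratio `d_rk(x,Δ)/d_dim(x,Δ) = c/2 → ∞` as
`c → ∞`, and `d_dim(x,Δ)/d_rk(x,Δ) = 2/c → ∞` as `c → 0⁺`. -/
theorem stmt2 :
    (∀ C : ℝ, 0 < C →
      (∃ u v : PtD, u ≠ v ∧ C * ddimQ u v < drkQ u v) ∧
      (∃ u v : PtD, u ≠ v ∧ C * drkQ u v < ddimQ u v)) ∧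
    (∀ c : ℝ, ∀ hc : 0 < c,
      drkQ (some ⟨(0, c), hc⟩) none / ddimQ (some ⟨(0, c), hc⟩) none = c / 2 ∧
      ddimQ (some ⟨(0, c), hc⟩) none / drkQ (some ⟨(0, c), hc⟩) none = 2 / c) ∧
    Tendsto (fun c : ℝ => c / 2) atTop atTop ∧
    Tendsto (fun c : ℝ => 2 / c) (nhdsWithin 0 (Set.Ioi 0)) atTop :=
  ⟨fun C _ => ⟨exists_ne_mul_ddimQ_lt_drkQ C, exists_ne_mul_drkQ_lt_ddimQ C⟩,
    fun c hc => ⟨drkQ_div_ddimQ_some_zero_none c hc, ddimQ_div_drkQ_some_zero_none c hc⟩,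
    tendsto_div_two_atTop, tendsto_two_div_nhdsGT_zero⟩

end
end

section
/- Let α and β be finite persistence diagrams. Then ‖Λα − Λβ‖₁ ≤ ½ W₁^rk(α, β). -/
/-!
At a fixed time `t`, the landscape values `λ_α(k, t)`, `k ≥ 1`, are the decreasing
rearrangement of the tent values `tent_x(t)`, `x ∈ α`. A coupling of `α` and `β`, in which the
points matched with the diagonal are paired with the value `0`, pairs these values up, and
rearranging both sides decreasingly can only lower the `ℓ¹` distance between paired values:
exchanging two pairs so that the largest values meet does not increase the cost. Hence
`∑ₖ |λ_α(k, t) - λ_β(k, t)|` is at most the cost of the coupling for the ground distance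
`|tent_x(t) - tent_y(t)|`. Integrating in `t` gives `∫ |tent_x - tent_y| = ½ d_rk(x, y)`,
because `∫ tent_x = ¼ (x₂ - x₁)²` and `min(tent_x, tent_y)` is the tent of the intersection of
the two intervals.
-/

open scoped Classical ENNReal
open MeasureTheory Filter

noncomputable section

/-- The cost of the coupling between finite diagrams `α` and `β` determined by
the multiset `m` of matched pairs: matched pairs pay `d` between themselves,
and every unmatched point of `α` or `β` is matched with the diagonal `Δ`. -/
def cost (d : PtD → PtD → ℝ) (α β : Multiset Pt) (m : Multiset (Pt × Pt)) : ℝ :=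
  (m.map fun p => d (some p.1) (some p.2)).sum
    + ((α - m.map Prod.fst).map fun x => d (some x) none).sum
    + ((β - m.map Prod.snd).map fun y => d none (some y)).sum

/-- The 1-Wasserstein distance between finite persistence diagrams with ground
metric `d`: the infimum of the costs of all couplings. -/
def W1fin (d : PtD → PtD → ℝ) (α β : Multiset Pt) : ℝ :=
  sInf {c : ℝ | ∃ m : Multiset (Pt × Pt),
    m.map Prod.fst ≤ α ∧ m.map Prod.snd ≤ β ∧ c = cost d α β m}

/-- The tent function `tent_x(t) = max(0, min(t−x₁, x₂−t))`. -/
def tent (x : Pt) (t : ℝ) : ℝ := max 0 (min (t - x.1.1) (x.1.2 - t))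

/-- The persistence landscape `λ_α(k,t)`: the `k`-th largest element of the
multiset `{tent_x(t) : x ∈ α}` (and `0` if `α` has fewer than `k` elements). -/
def landscape (α : Multiset Pt) (k : ℕ) (t : ℝ) : ℝ :=
  sSup {h : ℝ | 0 < h ∧ k ≤ Multiset.card (α.filter fun x => h ≤ tent x t)}

/-- `‖Λα − Λβ‖₁ = ∑_{k ≥ 1} ∫ |λ_α(k,t) − λ_β(k,t)| dt`. -/
def lambdaDistFin (α β : Multiset Pt) : ℝ :=
  ∑' k : ℕ, ∫ t : ℝ, |landscape α (k + 1) t - landscape β (k + 1) t|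

-- `kthLargest s k` is the `(k + 1)`-st largest element of `s`, and `0` once `card s ≤ k`.
def kthLargest (s : Multiset ℝ) (k : ℕ) : ℝ := (s.sort (· ≥ ·)).getD k 0

section KthLargest

open Multiset

variable {s : Multiset ℝ} {a h : ℝ} {k : ℕ}

theorem kthLargest_of_card_le (hk : card s ≤ k) : kthLargest s k = 0 :=
  List.getD_eq_default _ _ (by rwa [length_sort])

theorem kthLargest_mem_or_eq_zero (s : Multiset ℝ) (k : ℕ) :
    kthLargest s k ∈ s ∨ kthLargest s k = 0 := by
  rcases lt_or_ge k (s.sort (· ≥ ·)).length with hk | hk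
  · exact .inl <| (mem_sort _).1 <| (List.getD_eq_getElem _ _ hk).symm ▸ List.getElem_mem hk
  · exact .inr <| List.getD_eq_default _ _ hk

theorem kthLargest_nonneg (hs : ∀ x ∈ s, 0 ≤ x) (k : ℕ) : 0 ≤ kthLargest s k :=
  (kthLargest_mem_or_eq_zero s k).elim (hs _) (·.ge)

theorem kthLargest_le_sum (hs : ∀ x ∈ s, 0 ≤ x) (k : ℕ) : kthLargest s k ≤ s.sum :=
  (kthLargest_mem_or_eq_zero s k).elim (single_le_sum hs _) fun h0 => h0 ▸ sum_nonneg hs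

theorem kthLargest_cons_zero (ha : ∀ b ∈ s, b ≤ a) : kthLargest (a ::ₘ s) 0 = a := by
  rw [kthLargest, sort_cons _ _ _ ha]; rfl

theorem kthLargest_cons_succ (ha : ∀ b ∈ s, b ≤ a) (k : ℕ) :
    kthLargest (a ::ₘ s) (k + 1) = kthLargest s k := by
  rw [kthLargest, sort_cons _ _ _ ha]; rfl

theorem exists_eq_cons_max (hs : s ≠ 0) : ∃ a t, s = a ::ₘ t ∧ ∀ b ∈ t, b ≤ a := by
  obtain ⟨a, ha, hmax⟩ := exists_max_image id hs
  exact ⟨a, s.erase a, (cons_erase ha).symm, fun b hb => hmax b (mem_of_mem_erase hb)⟩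

theorem le_kthLargest_zero (hx : h ∈ s) : h ≤ kthLargest s 0 := by
  obtain ⟨a, t, rfl, ha⟩ := exists_eq_cons_max (ne_of_mem_of_not_mem' hx (notMem_zero h))
  rw [kthLargest_cons_zero ha]
  exact (mem_cons.1 hx).elim le_of_eq (ha h)

theorem kthLargest_add_replicate_zero (hs : ∀ x ∈ s, 0 ≤ x) (j k : ℕ) :
    kthLargest (s + replicate j 0) k = kthLargest s k := by
  have hsort : (s + replicate j 0).sort (· ≥ ·) = s.sort (· ≥ ·) ++ List.replicate j 0 := by
    refine List.Perm.eq_of_pairwise' (pairwise_sort _ _) ?_ (coe_eq_coe.1 ?_)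
    · refine List.pairwise_append.2 ⟨pairwise_sort _ _, by simp, fun x hx y hy => ?_⟩
      rw [List.eq_of_mem_replicate hy]
      exact hs x ((mem_sort _).1 hx)
    · rw [sort_eq, ← coe_add, sort_eq, coe_replicate]
  rw [kthLargest, kthLargest, hsort]
  grind

theorem succ_le_card_filter_iff (hh : 0 < h) :
    k + 1 ≤ card (s.filter (h ≤ ·)) ↔ h ≤ kthLargest s k := by
  induction k generalizing s with
  | zero =>
    simp only [zero_add, Nat.one_le_iff_ne_zero, Ne, card_eq_zero, filter_eq_nil, not_forall,
      not_not, exists_prop]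
    refine ⟨fun ⟨x, hx, hhx⟩ => hhx.trans (le_kthLargest_zero hx), fun hk => ?_⟩
    rcases kthLargest_mem_or_eq_zero s 0 with hm | h0
    · exact ⟨_, hm, hk⟩
    · exact absurd (h0 ▸ hk) hh.not_ge
  | succ k ih =>
    rcases eq_or_ne s 0 with rfl | hs
    · rw [kthLargest_of_card_le (by simp)]
      simp [hh.not_ge]
    obtain ⟨a, t, rfl, ha⟩ := exists_eq_cons_max hs
    rw [kthLargest_cons_succ ha, ← ih, filter_cons]
    split_ifs with hha
    · simp
    · rw [filter_eq_nil.2 fun b hb => not_le.2 ((ha b hb).trans_lt (not_le.1 hha))]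
      simp

theorem sSup_setOf_succ_le_card_filter (hs : ∀ x ∈ s, 0 ≤ x) (k : ℕ) :
    sSup {h : ℝ | 0 < h ∧ k + 1 ≤ card (s.filter (h ≤ ·))} = kthLargest s k := by
  have hset : {h : ℝ | 0 < h ∧ k + 1 ≤ card (s.filter (h ≤ ·))}
      = Set.Ioc 0 (kthLargest s k) := by
    ext h
    exact and_congr_right succ_le_card_filter_iff
  rw [hset]
  rcases (kthLargest_nonneg hs k).lt_or_eq with hpos | hzero
  · exact csSup_Ioc hpos
  · rw [← hzero, Set.Ioc_self, Real.sSup_empty]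

end KthLargest

theorem abs_sub_add_abs_sub_le_of_le {a a' b b' : ℝ} (ha : a' ≤ a) (hb : b' ≤ b) :
    |a - b| + |a' - b'| ≤ |a - b'| + |a' - b| := by
  rcases abs_cases (a - b) with h₁ | h₁ <;> rcases abs_cases (a' - b') with h₂ | h₂ <;>
  rcases abs_cases (a - b') with h₃ | h₃ <;> rcases abs_cases (a' - b) with h₄ | h₄ <;>
  linarith

section Rearrangement

open Multiset

-- If the largest first and second coordinates sit in different pairs `p` and `q`, the pair
-- `(p.1, q.2)` is split off and `(q.1, p.2)` stays in `N`; this exchange does not increase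
-- the cost.
theorem exists_cons_max_fst_snd (M : Multiset (ℝ × ℝ)) (hM : M ≠ 0) :
    ∃ (a b : ℝ) (N : Multiset (ℝ × ℝ)),
      M.map Prod.fst = a ::ₘ N.map Prod.fst ∧ (∀ x ∈ M.map Prod.fst, x ≤ a) ∧
      M.map Prod.snd = b ::ₘ N.map Prod.snd ∧ (∀ y ∈ M.map Prod.snd, y ≤ b) ∧
      |a - b| + (N.map fun r => |r.1 - r.2|).sum ≤ (M.map fun r => |r.1 - r.2|).sum := by
  obtain ⟨p, hp, hpmax⟩ := exists_max_image Prod.fst hM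
  obtain ⟨q, hq, hqmax⟩ := exists_max_image Prod.snd hM
  have hpmax' := (forall_mem_map_iff (f := Prod.fst) (p := (· ≤ p.1))).2 hpmax
  have hqmax' := (forall_mem_map_iff (f := Prod.snd) (p := (· ≤ q.2))).2 hqmax
  rcases eq_or_ne q p with rfl | hqp
  · obtain ⟨N, rfl⟩ : ∃ N, M = q ::ₘ N := ⟨M.erase q, (cons_erase hq).symm⟩
    exact ⟨q.1, q.2, N, by simp, hpmax', by simp, hqmax', by simp⟩
  · obtain ⟨R, rfl⟩ : ∃ R, M = p ::ₘ q ::ₘ R :=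
      ⟨(M.erase p).erase q, by rw [cons_erase ((mem_erase_of_ne hqp).2 hq), cons_erase hp]⟩
    refine ⟨p.1, q.2, (q.1, p.2) ::ₘ R, by simp, hpmax', by simp [cons_swap], hqmax', ?_⟩
    have hswap := abs_sub_add_abs_sub_le_of_le (hpmax q (by simp)) (hqmax p (by simp))
    simp only [map_cons, sum_cons]
    linarith

theorem sum_abs_kthLargest_sub_le (M : Multiset (ℝ × ℝ)) (n : ℕ) :
    ∑ k ∈ Finset.range n, |kthLargest (M.map Prod.fst) k - kthLargest (M.map Prod.snd) k|
      ≤ (M.map fun r => |r.1 - r.2|).sum := by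
  induction n generalizing M with
  | zero =>
    rw [Finset.sum_range_zero]
    exact sum_nonneg fun x hx => by
      obtain ⟨r, -, rfl⟩ := mem_map.1 hx
      exact abs_nonneg _
  | succ n ih =>
    rcases eq_or_ne M 0 with rfl | hM
    · simp
    obtain ⟨a, b, N, hfst, ha, hsnd, hb, hcost⟩ := exists_cons_max_fst_snd M hM
    rw [hfst] at ha
    rw [hsnd] at hb
    have ha' : ∀ x ∈ N.map Prod.fst, x ≤ a := fun x hx => ha x (mem_cons_of_mem hx)
    have hb' : ∀ y ∈ N.map Prod.snd, y ≤ b := fun y hy => hb y (mem_cons_of_mem hy)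
    rw [Finset.sum_range_succ', hfst, hsnd, kthLargest_cons_zero ha', kthLargest_cons_zero hb']
    simp only [kthLargest_cons_succ ha', kthLargest_cons_succ hb']
    linarith [ih N]

theorem abs_kthLargest_map_sub_le {ι : Type*} (s : Multiset ι) (f g : ι → ℝ) (k : ℕ) :
    |kthLargest (s.map f) k - kthLargest (s.map g) k| ≤ (s.map fun i => |f i - g i|).sum := by
  have h := sum_abs_kthLargest_sub_le (s.map fun i => (f i, g i)) (k + 1)
  simp only [Multiset.map_map, Function.comp_def] at h
  exact (Finset.single_le_sum (f := fun j => |kthLargest (s.map f) j - kthLargest (s.map g) j|)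
    (fun _ _ => abs_nonneg _) (Finset.self_mem_range_succ k)).trans h

end Rearrangement

def tentFun (a b t : ℝ) : ℝ := max 0 (min (t - a) (b - t))

section Tent

variable {a b t : ℝ}

theorem tent_eq_tentFun (x : Pt) : tent x = tentFun x.1.1 x.1.2 := rfl

theorem tentFun_nonneg (a b t : ℝ) : 0 ≤ tentFun a b t := le_max_left _ _

theorem lipschitzWith_tentFun (a b : ℝ) : LipschitzWith 1 (tentFun a b) := by
  have h := ((IsometryEquiv.subRight a).isometry.lipschitz.min
    (IsometryEquiv.subLeft b).isometry.lipschitz).const_max 0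
  rwa [max_self] at h

theorem continuous_tentFun (a b : ℝ) : Continuous (tentFun a b) :=
  (lipschitzWith_tentFun a b).continuous

theorem tentFun_eq_zero_of_notMem (ht : t ∉ Set.Icc a b) : tentFun a b t = 0 := by
  rw [Set.mem_Icc, not_and_or, not_le, not_le] at ht
  refine max_eq_left ?_
  rcases ht with ht | ht
  · exact min_le_of_left_le (by linarith)
  · exact min_le_of_right_le (by linarith)

theorem integrable_tentFun (a b : ℝ) : Integrable (tentFun a b) :=
  (continuous_tentFun a b).integrable_of_hasCompactSupport
    (HasCompactSupport.intro isCompact_Icc fun _ => tentFun_eq_zero_of_notMem)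

theorem min_tentFun_tentFun (a b c d t : ℝ) :
    min (tentFun a b t) (tentFun c d t) = tentFun (max a c) (min b d) t := by
  simp only [tentFun]
  rw [← max_min_distrib_left, min_min_min_comm, min_sub_sub_left, min_sub_sub_right]

theorem integral_tentFun_of_le (hab : a ≤ b) : ∫ t, tentFun a b t = (b - a) ^ 2 / 4 := by
  set c := (a + b) / 2 with hc
  have hac : a ≤ c := by linarith
  have hcb : c ≤ b := by linarith
  have hint : ∀ u v, IntervalIntegrable (tentFun a b) volume u v :=
    fun u v => (continuous_tentFun a b).intervalIntegrable u v
  have hleft : ∫ t in a..c, tentFun a b t = ∫ t in a..c, (t - a) := by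
    refine intervalIntegral.integral_congr fun t ht => ?_
    rw [Set.uIcc_of_le hac] at ht
    exact (max_eq_right (le_min (by linarith [ht.1]) (by linarith [ht.2]))).trans
      (min_eq_left (by linarith [ht.2]))
  have hright : ∫ t in c..b, tentFun a b t = ∫ t in c..b, (b - t) := by
    refine intervalIntegral.integral_congr fun t ht => ?_
    rw [Set.uIcc_of_le hcb] at ht
    exact (max_eq_right (le_min (by linarith [ht.1]) (by linarith [ht.2]))).trans
      (min_eq_right (by linarith [ht.1]))
  rw [← setIntegral_eq_integral_of_forall_compl_eq_zero fun t => tentFun_eq_zero_of_notMem,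
    integral_Icc_eq_integral_Ioc, ← intervalIntegral.integral_of_le hab,
    ← intervalIntegral.integral_add_adjacent_intervals (hint a c) (hint c b), hleft, hright,
    intervalIntegral.integral_sub intervalIntegral.intervalIntegrable_id intervalIntegrable_const,
    intervalIntegral.integral_sub intervalIntegrable_const intervalIntegral.intervalIntegrable_id]
  simp only [integral_id, intervalIntegral.integral_const, smul_eq_mul, c]
  ring

theorem integral_tentFun (a b : ℝ) : ∫ t, tentFun a b t = max (b - a) 0 ^ 2 / 4 := by
  rcases le_total a b with hab | hba
  · rw [integral_tentFun_of_le hab, max_eq_left (sub_nonneg.2 hab)]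
  · have hzero : ∀ t, tentFun a b t = 0 := fun t => max_eq_left <| (le_total t a).elim
      (fun h => min_le_of_left_le (by linarith)) (fun h => min_le_of_right_le (by linarith))
    simp [hzero, max_eq_right (sub_nonpos.2 hba)]

theorem integral_abs_tentFun_sub (a b c d : ℝ) :
    ∫ t, |tentFun a b t - tentFun c d t|
      = max (b - a) 0 ^ 2 / 4 + max (d - c) 0 ^ 2 / 4
        - max (min b d - max a c) 0 ^ 2 / 2 := by
  have habs : ∀ u v : ℝ, |u - v| = u + v - 2 * min u v := fun u v => by
    rw [← max_sub_min_eq_abs', ← min_add_max u v]; ring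
  have hsum : Integrable fun t => tentFun a b t + tentFun c d t :=
    (integrable_tentFun a b).add (integrable_tentFun c d)
  simp only [habs, min_tentFun_tentFun]
  rw [integral_sub hsum ((integrable_tentFun _ _).const_mul 2),
    integral_add (integrable_tentFun a b) (integrable_tentFun c d), integral_const_mul,
    integral_tentFun, integral_tentFun, integral_tentFun]
  ring

end Tent

def tentD : PtD → ℝ → ℝ
  | some x => tent x
  | none => 0

theorem integrable_tentD (u : PtD) : Integrable (tentD u) := by
  rcases u with _ | x
  · exact integrable_zero ℝ ℝ volume
  · exact integrable_tentFun _ _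

theorem integral_abs_tentD_sub (u v : PtD) :
    ∫ t, |tentD u t - tentD v t| = drkQ u v / 2 := by
  have hlen : ∀ x : Pt, max (x.1.2 - x.1.1) 0 = x.1.2 - x.1.1 :=
    fun x => max_eq_left (sub_nonneg.2 x.2.le)
  rcases u with _ | x <;> rcases v with _ | y
  · simp [tentD, drkQ]
  · simp only [tentD, drkQ, Pi.zero_apply, zero_sub, abs_neg, tent_eq_tentFun,
      abs_of_nonneg (tentFun_nonneg _ _ _), integral_tentFun, hlen]
    ring
  · simp only [tentD, drkQ, Pi.zero_apply, sub_zero, tent_eq_tentFun,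
      abs_of_nonneg (tentFun_nonneg _ _ _), integral_tentFun, hlen]
    ring
  · simp only [tentD, drkQ, drk, tent_eq_tentFun, integral_abs_tentFun_sub, hlen]
    ring

section MultisetIntegral

open Multiset

variable {X E : Type*} [MeasurableSpace X] {μ : Measure X} [NormedAddCommGroup E]

theorem integrable_multisetSum_map {ι : Type*} (s : Multiset ι) {F : ι → X → E}
    (hF : ∀ i ∈ s, Integrable (F i) μ) :
    Integrable (fun t => (s.map fun i => F i t).sum) μ := by
  induction s using Multiset.induction_on with
  | empty => simp
  | cons a s ih =>
    simp only [map_cons, sum_cons]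
    exact (hF a (mem_cons_self a s)).add (ih fun i hi => hF i (mem_cons_of_mem hi))

theorem integral_multisetSum_map [NormedSpace ℝ E] {ι : Type*} (s : Multiset ι)
    {F : ι → X → E} (hF : ∀ i ∈ s, Integrable (F i) μ) :
    ∫ t, (s.map fun i => F i t).sum ∂μ = (s.map fun i => ∫ t, F i t ∂μ).sum := by
  induction s using Multiset.induction_on with
  | empty => simp
  | cons a s ih =>
    have hs : ∀ i ∈ s, Integrable (F i) μ := fun i hi => hF i (mem_cons_of_mem hi)
    simp only [map_cons, sum_cons]
    rw [integral_add (hF a (mem_cons_self a s)) (integrable_multisetSum_map s hs), ih hs]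

end MultisetIntegral

section Cost

variable {X : Type*} [MeasurableSpace X] {μ : Measure X} {α β : Multiset Pt}
  {m : Multiset (Pt × Pt)}

open Multiset

theorem integrable_cost {d : X → PtD → PtD → ℝ}
    (hd : ∀ u v, Integrable (fun t => d t u v) μ) :
    Integrable (fun t => cost (d t) α β m) μ :=
  ((integrable_multisetSum_map _ fun _ _ => hd _ _).add
    (integrable_multisetSum_map _ fun _ _ => hd _ _)).add
    (integrable_multisetSum_map _ fun _ _ => hd _ _)

theorem integral_cost {d : X → PtD → PtD → ℝ}
    (hd : ∀ u v, Integrable (fun t => d t u v) μ) :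
    ∫ t, cost (d t) α β m ∂μ = cost (fun u v => ∫ t, d t u v ∂μ) α β m := by
  have hmatched : Integrable (fun t => (m.map fun p => d t (some p.1) (some p.2)).sum) μ :=
    integrable_multisetSum_map _ fun _ _ => hd _ _
  have hα : Integrable (fun t => ((α - m.map Prod.fst).map fun x => d t (some x) none).sum) μ :=
    integrable_multisetSum_map _ fun _ _ => hd _ _
  have hβ : Integrable (fun t => ((β - m.map Prod.snd).map fun y => d t none (some y)).sum) μ :=
    integrable_multisetSum_map _ fun _ _ => hd _ _
  have hmα : Integrable (fun t => (m.map fun p => d t (some p.1) (some p.2)).sum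
      + ((α - m.map Prod.fst).map fun x => d t (some x) none).sum) μ := hmatched.add hα
  simp only [cost]
  rw [integral_add hmα hβ, integral_add hmatched hα]
  simp only [integral_multisetSum_map _ fun _ _ => hd _ _]

theorem cost_div_two (d : PtD → PtD → ℝ) :
    cost (fun u v => d u v / 2) α β m = cost d α β m / 2 := by
  simp only [cost, div_eq_mul_inv, sum_map_mul_right, add_mul]

/-- Padding both sides with zeros for the points matched with the diagonal turns a coupling
into a multiset of pairs, to which the rearrangement inequality applies. -/
theorem sum_abs_kthLargest_sub_le_cost (f : PtD → ℝ) (hf : ∀ x, 0 ≤ f (some x))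
    (hf0 : f none = 0) (hmα : m.map Prod.fst ≤ α) (hmβ : m.map Prod.snd ≤ β) (n : ℕ) :
    ∑ k ∈ Finset.range n,
        |kthLargest (α.map fun x => f (some x)) k - kthLargest (β.map fun y => f (some y)) k|
      ≤ cost (fun u v => |f u - f v|) α β m := by
  set M : Multiset (ℝ × ℝ) := m.map (fun p => (f (some p.1), f (some p.2)))
    + (α - m.map Prod.fst).map (fun x => (f (some x), f none))
    + (β - m.map Prod.snd).map (fun y => (f none, f (some y)))
  have hfst : M.map Prod.fst = α.map (fun x => f (some x))
      + replicate (card (β - m.map Prod.snd)) 0 := by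
    conv_rhs => rw [← add_tsub_cancel_of_le hmα]
    simp [M, hf0, Multiset.map_map]
  have hsnd : M.map Prod.snd = β.map (fun y => f (some y))
      + replicate (card (α - m.map Prod.fst)) 0 := by
    conv_rhs => rw [← add_tsub_cancel_of_le hmβ]
    simp [M, hf0, Multiset.map_map, add_right_comm]
  have hcost : cost (fun u v => |f u - f v|) α β m = (M.map fun r => |r.1 - r.2|).sum := by
    simp [cost, M, Multiset.map_map]
  have hnonneg : ∀ {s : Multiset Pt} (z : ℝ), z ∈ s.map (fun x => f (some x)) → 0 ≤ z :=
    fun z hz => by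
      obtain ⟨x, -, rfl⟩ := mem_map.1 hz
      exact hf x
  have h := sum_abs_kthLargest_sub_le M n
  simp only [hfst, hsnd, kthLargest_add_replicate_zero hnonneg] at h
  exact h.trans_eq hcost.symm

end Cost

section Landscape

variable (α β : Multiset Pt)

theorem nonneg_of_mem_map_tent {t z : ℝ} (hz : z ∈ α.map fun x => tent x t) : 0 ≤ z := by
  obtain ⟨x, -, rfl⟩ := Multiset.mem_map.1 hz
  exact tentFun_nonneg _ _ _

theorem landscape_succ (k : ℕ) (t : ℝ) :
    landscape α (k + 1) t = kthLargest (α.map fun x => tent x t) k := by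
  rw [← sSup_setOf_succ_le_card_filter (fun _ => nonneg_of_mem_map_tent α), landscape]
  simp [Multiset.filter_map]

theorem landscape_of_card_le {k : ℕ} (hk : Multiset.card α ≤ k) (t : ℝ) :
    landscape α (k + 1) t = 0 := by
  rw [landscape_succ, kthLargest_of_card_le (by rwa [Multiset.card_map])]

theorem lipschitzWith_landscape (k : ℕ) :
    LipschitzWith (Multiset.card α) (landscape α (k + 1)) := by
  refine LipschitzWith.of_dist_le_mul fun t t' => ?_
  simp only [landscape_succ, Real.dist_eq, NNReal.coe_natCast]
  calc |kthLargest (α.map fun x => tent x t) k - kthLargest (α.map fun x => tent x t') k|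
      ≤ (α.map fun x => |tent x t - tent x t'|).sum := abs_kthLargest_map_sub_le α _ _ k
    _ ≤ (α.map fun _ => |t - t'|).sum := Multiset.sum_map_le_sum_map _ _ fun x _ => by
        have h : LipschitzWith 1 (tent x) := lipschitzWith_tentFun _ _
        simpa [Real.dist_eq] using h.dist_le_mul t t'
    _ = Multiset.card α * |t - t'| := by simp

theorem integrable_landscape (k : ℕ) : Integrable (landscape α (k + 1)) := by
  refine Integrable.mono' (integrable_multisetSum_map α fun x _ => integrable_tentD (some x))
    (lipschitzWith_landscape α k).continuous.aestronglyMeasurable (.of_forall fun t => ?_)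
  have hnonneg : ∀ z ∈ α.map fun x => tent x t, 0 ≤ z := fun _ => nonneg_of_mem_map_tent α
  rw [landscape_succ, Real.norm_of_nonneg (kthLargest_nonneg hnonneg k)]
  exact kthLargest_le_sum hnonneg k

theorem lambdaDistFin_eq_sum : lambdaDistFin α β =
    ∑ k ∈ Finset.range (Multiset.card α + Multiset.card β),
      ∫ t, |landscape α (k + 1) t - landscape β (k + 1) t| := by
  refine tsum_eq_sum fun k hk => ?_
  rw [Finset.mem_range, not_lt] at hk
  simp [landscape_of_card_le α (k := k) (by omega), landscape_of_card_le β (k := k) (by omega)]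

theorem sum_abs_landscape_sub_le_cost {m : Multiset (Pt × Pt)} (hmα : m.map Prod.fst ≤ α)
    (hmβ : m.map Prod.snd ≤ β) (n : ℕ) (t : ℝ) :
    ∑ k ∈ Finset.range n, |landscape α (k + 1) t - landscape β (k + 1) t|
      ≤ cost (fun u v => |tentD u t - tentD v t|) α β m := by
  simpa only [landscape_succ, tentD] using sum_abs_kthLargest_sub_le_cost (fun u => tentD u t)
    (fun x => tentFun_nonneg _ _ _) rfl hmα hmβ n

theorem lambdaDistFin_le_cost {m : Multiset (Pt × Pt)} (hmα : m.map Prod.fst ≤ α)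
    (hmβ : m.map Prod.snd ≤ β) : lambdaDistFin α β ≤ cost drkQ α β m / 2 := by
  have hterm : ∀ k, Integrable fun t => |landscape α (k + 1) t - landscape β (k + 1) t| :=
    fun k => ((integrable_landscape α k).sub (integrable_landscape β k)).abs
  have habs : ∀ u v, Integrable fun t => |tentD u t - tentD v t| :=
    fun u v => ((integrable_tentD u).sub (integrable_tentD v)).abs
  rw [lambdaDistFin_eq_sum, ← integral_finsetSum _ fun k _ => hterm k]
  calc _ ≤ ∫ t, cost (fun u v => |tentD u t - tentD v t|) α β m :=
        integral_mono (integrable_finsetSum _ fun k _ => hterm k) (integrable_cost habs)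
          (sum_abs_landscape_sub_le_cost α β hmα hmβ _)
    _ = cost drkQ α β m / 2 := by
        rw [integral_cost habs]
        simp only [integral_abs_tentD_sub, cost_div_two]

end Landscape

/-- Landscape stability for finite persistence diagrams:
`‖Λα − Λβ‖₁ ≤ ½ W₁^rk(α, β)`. -/
theorem stmt8 (α β : Multiset Pt) :
    lambdaDistFin α β ≤ (1 / 2) * W1fin drkQ α β := by
  have hcouplings : {c : ℝ | ∃ m : Multiset (Pt × Pt),
      m.map Prod.fst ≤ α ∧ m.map Prod.snd ≤ β ∧ c = cost drkQ α β m}.Nonempty :=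
    ⟨_, 0, by simp, by simp, rfl⟩
  have h : 2 * lambdaDistFin α β ≤ W1fin drkQ α β := by
    refine le_csInf hcouplings ?_
    rintro _ ⟨m, hmα, hmβ, rfl⟩
    linarith [lambdaDistFin_le_cost α β hmα hmβ]
  linarith

end
end

section
/- Let α, β, σ be finite persistence diagrams and let d be a metric on (ℝ²_≤ ∖ Δ) ∪ {Δ}. Then W₁^d(α + σ, β + σ) = W₁^d(α, β), where + denotes multiset sum of diagrams. -/
open scoped Classical ENNReal
open MeasureTheory Filter

noncomputable section

/-!
By induction on `σ` it suffices to add one point `s` to both diagrams. Matching the two new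
copies of `s` with each other costs `d s s = 0`, so the distance cannot grow. Conversely, in a
coupling of `s + α` with `s + β` the left copy of `s` is matched to some `y` and the right copy
to some `x` (either possibly `Δ`); matching `x` with `y` directly and discarding both copies of
`s` is a coupling of `α` with `β` that is no more expensive, by the triangle inequality through
`s`.
-/

lemma Multiset.exists_cons_of_map_le_cons_of_not_le {γ δ : Type*} {f : γ → δ}
    {m : Multiset γ} {s : δ} {A : Multiset δ}
    (h : m.map f ≤ s ::ₘ A) (hA : ¬ m.map f ≤ A) :
    ∃ p m₁, m = p ::ₘ m₁ ∧ f p = s ∧ m₁.map f ≤ A := by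
  have hs : s ∈ m.map f := by
    by_contra hs
    exact hA ((Multiset.le_cons_of_notMem hs).1 h)
  obtain ⟨p, hp, rfl⟩ := Multiset.mem_map.1 hs
  obtain ⟨m₁, rfl⟩ := Multiset.exists_cons_of_mem hp
  rw [Multiset.map_cons, Multiset.cons_le_cons_iff] at h
  exact ⟨p, m₁, rfl, rfl, h⟩

lemma exists_pair_of_snd_not_le {s : Pt} {α β : Multiset Pt} {m : Multiset (Pt × Pt)}
    (hα : m.map Prod.fst ≤ α) (hsβ : m.map Prod.snd ≤ s ::ₘ β) (hβ : ¬ m.map Prod.snd ≤ β) :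
    ∃ x α' m₁, α = x ::ₘ α' ∧ m = (x, s) ::ₘ m₁ ∧
      m₁.map Prod.fst ≤ α' ∧ m₁.map Prod.snd ≤ β := by
  obtain ⟨⟨x, _⟩, m₁, rfl, rfl, hm₁β⟩ := Multiset.exists_cons_of_map_le_cons_of_not_le hsβ hβ
  rw [Multiset.map_cons] at hα
  obtain ⟨α', rfl⟩ :=
    Multiset.exists_cons_of_mem (Multiset.mem_of_le hα (Multiset.mem_cons_self _ _))
  exact ⟨x, α', m₁, rfl, rfl, (Multiset.cons_le_cons_iff x).1 hα, hm₁β⟩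

section Coupling

variable (d : PtD → PtD → ℝ)

lemma cost_cons_cons_pair (x y : Pt) (α β : Multiset Pt) (m : Multiset (Pt × Pt)) :
    cost d (x ::ₘ α) (y ::ₘ β) ((x, y) ::ₘ m) = d (some x) (some y) + cost d α β m := by
  simp only [cost, Multiset.map_cons, Multiset.sum_cons, Multiset.sub_cons,
    Multiset.erase_cons_head]
  ring

lemma cost_cons_left (x : Pt) {α : Multiset Pt} (β : Multiset Pt) {m : Multiset (Pt × Pt)}
    (hm : m.map Prod.fst ≤ α) :
    cost d (x ::ₘ α) β m = d (some x) none + cost d α β m := by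
  simp only [cost, Multiset.cons_sub_of_le _ hm, Multiset.map_cons, Multiset.sum_cons]
  ring

lemma cost_cons_right (y : Pt) (α : Multiset Pt) {β : Multiset Pt} {m : Multiset (Pt × Pt)}
    (hm : m.map Prod.snd ≤ β) :
    cost d α (y ::ₘ β) m = d none (some y) + cost d α β m := by
  simp only [cost, Multiset.cons_sub_of_le _ hm, Multiset.map_cons, Multiset.sum_cons]
  ring

variable {d}

lemma exists_cost_le_remove_right (hd0 : ∀ u v : PtD, 0 ≤ d u v)
    (hdtri : ∀ u v w : PtD, d u w ≤ d u v + d v w) (s : Pt) {α β : Multiset Pt}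
    {m : Multiset (Pt × Pt)} (hα : m.map Prod.fst ≤ α) (hsβ : m.map Prod.snd ≤ s ::ₘ β) :
    ∃ m', m'.map Prod.fst ≤ α ∧ m'.map Prod.snd ≤ β ∧
      cost d α β m' ≤ d (some s) none + cost d α (s ::ₘ β) m := by
  by_cases hβ : m.map Prod.snd ≤ β
  · refine ⟨m, hα, hβ, ?_⟩
    rw [cost_cons_right d s α hβ]
    linarith [hd0 (some s) none, hd0 none (some s)]
  · obtain ⟨x, α', m₁, rfl, rfl, hm₁α, hm₁β⟩ := exists_pair_of_snd_not_le hα hsβ hβ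
    refine ⟨m₁, hm₁α.trans (Multiset.le_cons_self _ _), hm₁β, ?_⟩
    rw [cost_cons_cons_pair, cost_cons_left d x β hm₁α]
    linarith [hdtri (some x) (some s) none]

lemma exists_cost_le_replace_right (hdtri : ∀ u v w : PtD, d u w ≤ d u v + d v w)
    (s y : Pt) {α β : Multiset Pt} {m : Multiset (Pt × Pt)}
    (hα : m.map Prod.fst ≤ α) (hsβ : m.map Prod.snd ≤ s ::ₘ β) :
    ∃ m', m'.map Prod.fst ≤ α ∧ m'.map Prod.snd ≤ y ::ₘ β ∧
      cost d α (y ::ₘ β) m' ≤ d (some s) (some y) + cost d α (s ::ₘ β) m := by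
  by_cases hβ : m.map Prod.snd ≤ β
  · refine ⟨m, hα, hβ.trans (Multiset.le_cons_self _ _), ?_⟩
    rw [cost_cons_right d s α hβ, cost_cons_right d y α hβ]
    linarith [hdtri none (some s) (some y)]
  · obtain ⟨x, α', m₁, rfl, rfl, hm₁α, hm₁β⟩ := exists_pair_of_snd_not_le hα hsβ hβ
    refine ⟨(x, y) ::ₘ m₁, by simpa using hm₁α, by simpa using hm₁β, ?_⟩
    rw [cost_cons_cons_pair, cost_cons_cons_pair]
    linarith [hdtri (some x) (some s) (some y)]

lemma exists_cost_le_cons_cons (hd0 : ∀ u v : PtD, 0 ≤ d u v) (hdself : ∀ u : PtD, d u u = 0)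
    (hdtri : ∀ u v w : PtD, d u w ≤ d u v + d v w) (s : Pt) {α β : Multiset Pt}
    {m : Multiset (Pt × Pt)} (hsα : m.map Prod.fst ≤ s ::ₘ α) (hsβ : m.map Prod.snd ≤ s ::ₘ β) :
    ∃ m', m'.map Prod.fst ≤ α ∧ m'.map Prod.snd ≤ β ∧
      cost d α β m' ≤ cost d (s ::ₘ α) (s ::ₘ β) m := by
  by_cases hα : m.map Prod.fst ≤ α
  · rw [cost_cons_left d s _ hα]
    exact exists_cost_le_remove_right hd0 hdtri s hα hsβ
  obtain ⟨⟨s', y⟩, m₁, rfl, hs', hm₁α⟩ := Multiset.exists_cons_of_map_le_cons_of_not_le hsα hα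
  dsimp only at hs'
  subst s'
  rw [Multiset.map_cons] at hsβ
  by_cases hy : y = s
  · subst hy
    refine ⟨m₁, hm₁α, (Multiset.cons_le_cons_iff y).1 hsβ, ?_⟩
    rw [cost_cons_cons_pair, hdself, zero_add]
  -- `y ∈ β`; once the left `s` is dropped, `y` takes the place of the right `s`
  obtain ⟨β', rfl⟩ := Multiset.exists_cons_of_mem <| (Multiset.mem_cons.1 <|
    Multiset.mem_of_le hsβ (Multiset.mem_cons_self _ _)).resolve_left hy
  rw [Multiset.cons_swap s y, Multiset.cons_le_cons_iff] at hsβ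
  rw [Multiset.cons_swap s y, cost_cons_cons_pair]
  exact exists_cost_le_replace_right hdtri s y hm₁α hsβ

end Coupling

section Wasserstein

variable {d : PtD → PtD → ℝ}

lemma W1fin_le_cost (hd0 : ∀ u v : PtD, 0 ≤ d u v) {α β : Multiset Pt}
    {m : Multiset (Pt × Pt)} (hα : m.map Prod.fst ≤ α) (hβ : m.map Prod.snd ≤ β) :
    W1fin d α β ≤ cost d α β m := by
  refine csInf_le ⟨0, ?_⟩ ⟨m, hα, hβ, rfl⟩
  rintro _ ⟨m', -, -, rfl⟩
  unfold cost
  refine add_nonneg (add_nonneg ?_ ?_) ?_ <;>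
    exact Multiset.sum_nonneg fun _ hx ↦ by
      obtain ⟨_, -, rfl⟩ := Multiset.mem_map.1 hx
      exact hd0 _ _

lemma le_W1fin {α β : Multiset Pt} {c : ℝ}
    (h : ∀ m : Multiset (Pt × Pt), m.map Prod.fst ≤ α → m.map Prod.snd ≤ β → c ≤ cost d α β m) :
    c ≤ W1fin d α β :=
  le_csInf ⟨cost d α β 0, 0, by simp, by simp, rfl⟩ fun _ ⟨m, hα, hβ, hc⟩ ↦ hc ▸ h m hα hβ

lemma W1fin_cons_cons (hd0 : ∀ u v : PtD, 0 ≤ d u v) (hdself : ∀ u : PtD, d u u = 0)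
    (hdtri : ∀ u v w : PtD, d u w ≤ d u v + d v w) (s : Pt) (α β : Multiset Pt) :
    W1fin d (s ::ₘ α) (s ::ₘ β) = W1fin d α β := by
  refine le_antisymm (le_W1fin fun m hα hβ ↦ ?_) (le_W1fin fun m hsα hsβ ↦ ?_)
  · calc W1fin d (s ::ₘ α) (s ::ₘ β) ≤ cost d (s ::ₘ α) (s ::ₘ β) ((s, s) ::ₘ m) :=
          W1fin_le_cost hd0 (by simpa using hα) (by simpa using hβ)
      _ = cost d α β m := by rw [cost_cons_cons_pair, hdself, zero_add]
  · obtain ⟨m', hα, hβ, hcost⟩ := exists_cost_le_cons_cons hd0 hdself hdtri s hsα hsβ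
    exact (W1fin_le_cost hd0 hα hβ).trans hcost

end Wasserstein

theorem stmt10_general (d : PtD → PtD → ℝ)
    (hd0 : ∀ u v : PtD, 0 ≤ d u v)
    (hdeq : ∀ u v : PtD, d u v = 0 ↔ u = v)
    (hdtri : ∀ u v w : PtD, d u w ≤ d u v + d v w)
    (α β σ : Multiset Pt) :
    W1fin d (α + σ) (β + σ) = W1fin d α β := by
  induction σ using Multiset.induction with
  | empty => simp
  | cons s σ ih =>
    rw [Multiset.add_cons, Multiset.add_cons,
      W1fin_cons_cons hd0 (fun u ↦ (hdeq u u).2 rfl) hdtri, ih]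

/-- Adding a common finite diagram to both sides does not change the
1-Wasserstein distance: `W₁^d(α + σ, β + σ) = W₁^d(α, β)`. -/
theorem stmt10 (d : PtD → PtD → ℝ)
    (hd0 : ∀ u v : PtD, 0 ≤ d u v)
    (hdsymm : ∀ u v : PtD, d u v = d v u)
    (hdeq : ∀ u v : PtD, d u v = 0 ↔ u = v)
    (hdtri : ∀ u v w : PtD, d u w ≤ d u v + d v w)
    (α β σ : Multiset Pt) :
    W1fin d (α + σ) (β + σ) = W1fin d α β :=
  stmt10_general d hd0 hdeq hdtri α β σ

end
end

section
/- Let S be a finite set, let a < b be real numbers, let w, v : S → [a,b] be compatible weight functions (i.e. for all σ, τ ∈ S, w(σ) ≤ w(τ) if and only if v(σ) ≤ v(τ)), and set c = 2b − a. Let D_w be the finite persistence diagram consisting of the multiset of points {(w(σ), c) : σ ∈ S} and similarly D_v = {(v(σ), c) : σ ∈ S}. Then W₁^rk(D_w, D_v) = ∑_{σ ∈ S} d_rk((w(σ), c), (v(σ), c)) = ∑_{σ ∈ S} |½(c − w(σ))² − ½(c − v(σ))²|. -/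
open scoped Classical ENNReal
open MeasureTheory Filter

noncomputable section

/-!
On the common death line `c`, the rank distance between `(p, c)` and `(q, c)` is
`|F p - F q| = F p + F q - 2 min (F p) (F q)`, where `F` is the distance to the diagonal, so
the cost of any coupling is `∑_α F + ∑_β F - 2 ∑ min (F x) (F y)` over its matched pairs.
Minimising the cost means maximising the total overlap `∑ min (F x) (F y)`, and by an exchange
argument that is maximal when the points are matched in the order of their persistences, which
compatibility of `w` and `v` says the identity coupling does.
-/

lemma min_add_min_le_min_add_min {a b p q : ℝ} (hp : p ≤ a) (hq : q ≤ b) :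
    min a q + min p b ≤ min a b + min p q := by
  simp only [min_def]
  split_ifs <;> linarith

section Overlap

variable {a b : ℝ} {A B : Multiset ℝ} {m : Multiset (ℝ × ℝ)}

lemma exists_sum_min_le_of_fst_mem (hA : ∀ x ∈ A, x ≤ a) (hB : ∀ y ∈ B, y ≤ b)
    (h1 : m.map Prod.fst ≤ a ::ₘ A) (h2 : m.map Prod.snd ≤ b ::ₘ B) (ha : a ∈ m.map Prod.fst) :
    ∃ m' : Multiset (ℝ × ℝ), m'.map Prod.fst ≤ A ∧ m'.map Prod.snd ≤ B ∧
      (m.map fun p => min p.1 p.2).sum ≤ min a b + (m'.map fun p => min p.1 p.2).sum := by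
  obtain ⟨⟨a', q⟩, hmem, ha'⟩ := Multiset.mem_map.1 ha
  obtain rfl : a = a' := ha'.symm
  obtain ⟨m₁, rfl⟩ := Multiset.exists_cons_of_mem hmem
  simp only [Multiset.map_cons, Multiset.cons_le_cons_iff, Multiset.sum_cons] at h1 h2 ⊢
  have hq : q ≤ b := by
    rcases Multiset.mem_cons.1 (Multiset.mem_of_le h2 (Multiset.mem_cons_self _ _)) with rfl | h
    exacts [le_rfl, hB q h]
  by_cases hb : b ∈ m₁.map Prod.snd
  · -- exchange `(a, q), (p, b)` for `(a, b), (p, q)`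
    obtain ⟨⟨p, b'⟩, hmem', hb'⟩ := Multiset.mem_map.1 hb
    obtain rfl : b = b' := hb'.symm
    obtain ⟨m₂, rfl⟩ := Multiset.exists_cons_of_mem hmem'
    simp only [Multiset.map_cons, Multiset.sum_cons] at h1 h2 ⊢
    rw [Multiset.cons_swap, Multiset.cons_le_cons_iff] at h2
    have hp : p ≤ a := hA p (Multiset.mem_of_le h1 (Multiset.mem_cons_self _ _))
    refine ⟨(p, q) ::ₘ m₂, by simpa using h1, by simpa using h2, ?_⟩
    simp only [Multiset.map_cons, Multiset.sum_cons]
    linarith [min_add_min_le_min_add_min hp hq]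
  · refine ⟨m₁, h1, ?_, ?_⟩
    · exact (Multiset.le_cons_of_notMem hb).1 ((Multiset.le_cons_self _ q).trans h2)
    · linarith [min_le_min_left a hq]

lemma exists_sum_min_le_of_fst_notMem (hA : ∀ x ∈ A, x ≤ a) (hab : 0 ≤ min a b)
    (h1 : m.map Prod.fst ≤ a ::ₘ A) (h2 : m.map Prod.snd ≤ b ::ₘ B) (ha : a ∉ m.map Prod.fst) :
    ∃ m' : Multiset (ℝ × ℝ), m'.map Prod.fst ≤ A ∧ m'.map Prod.snd ≤ B ∧
      (m.map fun p => min p.1 p.2).sum ≤ min a b + (m'.map fun p => min p.1 p.2).sum := by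
  rw [Multiset.le_cons_of_notMem ha] at h1
  by_cases hb : b ∈ m.map Prod.snd
  · obtain ⟨⟨p, b'⟩, hmem, hb'⟩ := Multiset.mem_map.1 hb
    obtain rfl : b = b' := hb'.symm
    obtain ⟨m₁, rfl⟩ := Multiset.exists_cons_of_mem hmem
    simp only [Multiset.map_cons, Multiset.cons_le_cons_iff, Multiset.sum_cons] at h1 h2 ⊢
    have hp : p ≤ a := hA p (Multiset.mem_of_le h1 (Multiset.mem_cons_self _ _))
    refine ⟨m₁, (Multiset.le_cons_self _ p).trans h1, h2, ?_⟩
    linarith [min_le_min_right b hp]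
  · exact ⟨m, h1, (Multiset.le_cons_of_notMem hb).1 h2, by linarith⟩

/-- A partial matching between `a ::ₘ A` and `b ::ₘ B` where `a` and `b` are maximal can be
replaced by one matching `a` with `b` without decreasing the overlap. -/
lemma exists_sum_min_le_min_add (hA : ∀ x ∈ A, x ≤ a) (hB : ∀ y ∈ B, y ≤ b)
    (hab : 0 ≤ min a b) (h1 : m.map Prod.fst ≤ a ::ₘ A) (h2 : m.map Prod.snd ≤ b ::ₘ B) :
    ∃ m' : Multiset (ℝ × ℝ), m'.map Prod.fst ≤ A ∧ m'.map Prod.snd ≤ B ∧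
      (m.map fun p => min p.1 p.2).sum ≤ min a b + (m'.map fun p => min p.1 p.2).sum := by
  by_cases ha : a ∈ m.map Prod.fst
  · exact exists_sum_min_le_of_fst_mem hA hB h1 h2 ha
  · exact exists_sum_min_le_of_fst_notMem hA hab h1 h2 ha

theorem sum_min_le_sum_min_of_le_imp_le {ι : Type*} [DecidableEq ι] {f g : ι → ℝ}
    (hf : ∀ i, 0 ≤ f i) (hg : ∀ i, 0 ≤ g i) (hfg : ∀ i j, f i ≤ f j → g i ≤ g j)
    (s : Finset ι) {m : Multiset (ℝ × ℝ)}
    (h1 : m.map Prod.fst ≤ s.val.map f) (h2 : m.map Prod.snd ≤ s.val.map g) :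
    (m.map fun p => min p.1 p.2).sum ≤ ∑ i ∈ s, min (f i) (g i) := by
  induction s using Finset.induction_on_max_value f generalizing m with
  | empty =>
    obtain rfl : m = 0 := by simpa using h1
    simp
  | insert i s hi hmax ih =>
    rw [Finset.insert_val_of_notMem hi, Multiset.map_cons] at h1 h2
    obtain ⟨m', h1', h2', hle⟩ := exists_sum_min_le_min_add
      (by simpa using hmax) (by simpa using fun j hj => hfg j i (hmax j hj))
      (le_min (hf i) (hg i)) h1 h2
    rw [Finset.sum_insert hi]
    linarith [ih h1' h2']

end Overlap

lemma Multiset.sum_map_tsub_of_le {ι : Type*} [DecidableEq ι] (F : ι → ℝ) {s t : Multiset ι}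
    (h : s ≤ t) :
    ((t - s).map F).sum = (t.map F).sum - (s.map F).sum := by
  conv_rhs => rw [← tsub_add_cancel_of_le h, Multiset.map_add, Multiset.sum_add]
  ring

/-- `d_rk(x, Δ)`: `drkQ (some x) none` unfolds to `drkDiag x.1`. -/
def drkDiag (x : ℝ × ℝ) : ℝ := (x.2 - x.1) ^ 2 / 2

lemma drkDiag_nonneg (x : ℝ × ℝ) : 0 ≤ drkDiag x := by
  unfold drkDiag
  positivity

lemma drkDiag_le_drkDiag_iff {p q c : ℝ} (hp : p < c) (hq : q < c) :
    drkDiag (p, c) ≤ drkDiag (q, c) ↔ q ≤ p := by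
  unfold drkDiag
  rw [div_le_div_iff_of_pos_right two_pos,
    pow_le_pow_iff_left₀ (by linarith) (by linarith) two_ne_zero]
  exact sub_le_sub_iff_left c

lemma drk_eq_of_snd_eq {x y : ℝ × ℝ} (hx : x.1 ≤ x.2) (hy : y.1 ≤ y.2) (h : x.2 = y.2) :
    drk x y = drkDiag x + drkDiag y - 2 * min (drkDiag x) (drkDiag y) := by
  obtain ⟨p, c⟩ := x
  obtain ⟨q, _⟩ := y
  dsimp only at hx hy h
  subst h
  unfold drk drkDiag
  rw [min_self]
  rcases le_total p q with hpq | hpq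
  · rw [max_eq_right hpq, max_eq_left (by linarith),
      min_eq_right (by gcongr)]
    ring
  · rw [max_eq_left hpq, max_eq_left (by linarith),
      min_eq_left (by gcongr)]
    ring

lemma drk_eq_abs_of_snd_eq {x y : ℝ × ℝ} (hx : x.1 ≤ x.2) (hy : y.1 ≤ y.2) (h : x.2 = y.2) :
    drk x y = |drkDiag x - drkDiag y| := by
  rw [drk_eq_of_snd_eq hx hy h, ← max_sub_min_eq_abs']
  linarith [min_add_max (drkDiag x) (drkDiag y)]

lemma cost_drkQ_of_snd_eq {α β : Multiset Pt} {c : ℝ} (hα : ∀ x ∈ α, x.1.2 = c)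
    (hβ : ∀ y ∈ β, y.1.2 = c) {m : Multiset (Pt × Pt)}
    (h1 : m.map Prod.fst ≤ α) (h2 : m.map Prod.snd ≤ β) :
    cost drkQ α β m = (α.map fun x => drkDiag x.1).sum + (β.map fun y => drkDiag y.1).sum
      - 2 * (m.map fun p => min (drkDiag p.1.1) (drkDiag p.2.1)).sum := by
  have hmatched : (m.map fun p => drkQ (some p.1) (some p.2))
      = m.map fun p => drkDiag p.1.1 + drkDiag p.2.1 - 2 * min (drkDiag p.1.1) (drkDiag p.2.1) :=
    Multiset.map_congr rfl fun p hp => drk_eq_of_snd_eq p.1.2.le p.2.2.le <|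
      (hα _ (Multiset.mem_of_le h1 (Multiset.mem_map_of_mem _ hp))).trans
        (hβ _ (Multiset.mem_of_le h2 (Multiset.mem_map_of_mem _ hp))).symm
  rw [cost, hmatched, Multiset.sum_map_sub, Multiset.sum_map_add, Multiset.sum_map_mul_left]
  change _ + ((α - m.map Prod.fst).map fun x => drkDiag x.1).sum
    + ((β - m.map Prod.snd).map fun y => drkDiag y.1).sum = _
  rw [Multiset.sum_map_tsub_of_le _ h1, Multiset.sum_map_tsub_of_le _ h2,
    Multiset.map_map, Multiset.map_map]
  simp only [Function.comp_def]
  ring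

theorem W1fin_drkQ_map_eq_sum_drk {S : Type*} [Fintype S] (x y : S → Pt) (c : ℝ)
    (hx : ∀ σ, (x σ).1.2 = c) (hy : ∀ σ, (y σ).1.2 = c)
    (hxy : ∀ σ τ, drkDiag (x σ).1 ≤ drkDiag (x τ).1 → drkDiag (y σ).1 ≤ drkDiag (y τ).1) :
    W1fin drkQ (Finset.univ.val.map x) (Finset.univ.val.map y)
      = ∑ σ, drk (x σ).1 (y σ).1 := by
  set α := Finset.univ.val.map x
  set β := Finset.univ.val.map y
  have hα : ∀ z ∈ α, z.1.2 = c := by simpa [α] using hx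
  have hβ : ∀ z ∈ β, z.1.2 = c := by simpa [β] using hy
  set m₀ := Finset.univ.val.map fun σ => (x σ, y σ)
  have h₀1 : m₀.map Prod.fst = α := by simp [m₀, α, Multiset.map_map]
  have h₀2 : m₀.map Prod.snd = β := by simp [m₀, β, Multiset.map_map]
  have hoverlap : ∀ m : Multiset (Pt × Pt), m.map Prod.fst ≤ α → m.map Prod.snd ≤ β →
      (m.map fun p => min (drkDiag p.1.1) (drkDiag p.2.1)).sum
        ≤ ∑ σ, min (drkDiag (x σ).1) (drkDiag (y σ).1) := by
    intro m h1 h2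
    simpa only [Multiset.map_map, Function.comp_def] using
      sum_min_le_sum_min_of_le_imp_le (fun σ => drkDiag_nonneg _) (fun σ => drkDiag_nonneg _)
        hxy Finset.univ (m := m.map fun p => (drkDiag p.1.1, drkDiag p.2.1))
        (by simpa only [α, Multiset.map_map, Function.comp_def]
          using Multiset.map_le_map (f := fun z : Pt => drkDiag z.1) h1)
        (by simpa only [β, Multiset.map_map, Function.comp_def]
          using Multiset.map_le_map (f := fun z : Pt => drkDiag z.1) h2)
  have hoverlap₀ : (m₀.map fun p => min (drkDiag p.1.1) (drkDiag p.2.1)).sum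
      = ∑ σ, min (drkDiag (x σ).1) (drkDiag (y σ).1) := by
    simp only [m₀, Multiset.map_map, Function.comp_def]
    rfl
  have hcost₀ : cost drkQ α β m₀ = ∑ σ, drk (x σ).1 (y σ).1 := by
    simp only [cost, h₀1, h₀2, tsub_self, Multiset.map_zero, Multiset.sum_zero, add_zero, m₀,
      Multiset.map_map, Function.comp_def]
    rfl
  refine IsLeast.csInf_eq ⟨⟨m₀, h₀1.le, h₀2.le, hcost₀.symm⟩, ?_⟩
  rintro _ ⟨m, h1, h2, rfl⟩
  rw [← hcost₀, cost_drkQ_of_snd_eq hα hβ h₀1.le h₀2.le, cost_drkQ_of_snd_eq hα hβ h1 h2,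
    hoverlap₀]
  linarith [hoverlap m h1 h2]

/-- Let `w, v : S → [a,b]` be compatible weights on a finite set `S`, and
`c = 2b − a`. For the diagrams `D_w = {(w(σ), c) : σ ∈ S}` and
`D_v = {(v(σ), c) : σ ∈ S}` (the barcodes of the free persistence chain groups
generated by `S`), the 1-Wasserstein distance with ground metric `d_rk` equals
`∑_σ d_rk((w(σ),c),(v(σ),c)) = ∑_σ |½(c − w(σ))² − ½(c − v(σ))²|`. -/
theorem stmt19 {S : Type*} [Fintype S] (a b : ℝ) (hab : a < b)
    (w v : S → ℝ) (hw : ∀ σ, w σ ∈ Set.Icc a b) (hv : ∀ σ, v σ ∈ Set.Icc a b)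
    (hcomp : ∀ σ τ, w σ ≤ w τ ↔ v σ ≤ v τ) :
    W1fin drkQ
      (Finset.univ.val.map fun σ =>
        (⟨(w σ, 2 * b - a), show w σ < 2 * b - a by have := (hw σ).2; linarith⟩ : Pt))
      (Finset.univ.val.map fun σ =>
        (⟨(v σ, 2 * b - a), show v σ < 2 * b - a by have := (hv σ).2; linarith⟩ : Pt))
      = ∑ σ : S, drk (w σ, 2 * b - a) (v σ, 2 * b - a) ∧
    ∑ σ : S, drk (w σ, 2 * b - a) (v σ, 2 * b - a)
      = ∑ σ : S, |(2 * b - a - w σ) ^ 2 / 2 - (2 * b - a - v σ) ^ 2 / 2| := by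
  have hw' σ : w σ < 2 * b - a := by linarith [(hw σ).2]
  have hv' σ : v σ < 2 * b - a := by linarith [(hv σ).2]
  refine ⟨W1fin_drkQ_map_eq_sum_drk _ _ (2 * b - a) (fun _ => rfl) (fun _ => rfl) ?_,
    Finset.sum_congr rfl fun σ _ => drk_eq_abs_of_snd_eq (hw' σ).le (hv' σ).le rfl⟩
  intro σ τ
  simp only [drkDiag_le_drkDiag_iff (hw' _) (hw' _), drkDiag_le_drkDiag_iff (hv' _) (hv' _)]
  exact (hcomp τ σ).1

end
end
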